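/- arXiv:1602.03728 — 2 statements merged into one kernel-verified Lean document; each statement's English description precedes it below -/
import Mathlib

section
/- For any two first-order differential operators X, Y and any differential operator Z, the white-multiplication associators satisfy the left-symmetry identity (X, Y, Z)^∘ = (Y, X, Z)^∘. -/
/-!
For `|α| = 1` the operator `∂^α` is a derivation, so in `(u ∂^α) ∘ ((v ∂^β) ∘ (w ∂^γ))` the term
where `∂^α` falls on `v` is exactly `((u ∂^α) ∘ (v ∂^β)) ∘ (w ∂^γ)`; what is left is
`u v ∂^α ∂^β (w) ∂^γ = ((u ∂^α) • (v ∂^β)) ∘ (w ∂^γ)`. Hence for a first-order `X` the white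
associator is `(X, Y, Z)^∘ = (X • Y) ∘ Z`, and the black product is commutative.
-/

open Finsupp

/-- The space of linear differential operators in `n` variables (with polynomial
coefficients over `ℂ`): a formal finite sum `Σ_α u_α ∂^α`. -/
abbrev Diff (n : ℕ) := (Fin n →₀ ℕ) →₀ MvPolynomial (Fin n) ℂ

/-- The operator `∂^α = ∂₁^{α₁} ⋯ ∂ₙ^{αₙ}` acting on coefficient functions. -/
noncomputable def Dop {n : ℕ} (α : Fin n →₀ ℕ) :
    Module.End ℂ (MvPolynomial (Fin n) ℂ) :=
  (List.ofFn fun i : Fin n => ((MvPolynomial.pderiv i).toLinearMap) ^ (α i)).prod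

/-- White multiplication: `(u ∂^α) ∘ (v ∂^β) = u ∂^α(v) ∂^β`, extended bilinearly. -/
noncomputable def white {n : ℕ} (X Y : Diff n) : Diff n :=
  X.sum fun α u => Y.sum fun β v => Finsupp.single β (u * Dop α v)

/-- Black multiplication: `(u ∂^α) • (v ∂^β) = u v ∂^{α+β}`, extended bilinearly. -/
noncomputable def black {n : ℕ} (X Y : Diff n) : Diff n :=
  X.sum fun α u => Y.sum fun β v => Finsupp.single (α + β) (u * v)

/-- Composition of differential operators:
`(u ∂^α) ⋄ (v ∂^β) = Σ_{γ ≤ α} binom(α,γ) u ∂^γ(v) ∂^{α+β-γ}`, extended bilinearly. -/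
noncomputable def diam {n : ℕ} (X Y : Diff n) : Diff n :=
  X.sum fun α u => Y.sum fun β v =>
    ∑ γ ∈ Finset.Iic α,
      Finsupp.single (α + β - γ) (((∏ i, ((α i).choose (γ i)) : ℕ) : ℂ) • (u * Dop γ v))

/-- A differential operator is of first order (a vector field) if it has the
form `Σ_i u_i ∂_i`, i.e. every multi-index in its support has total degree 1. -/
def IsVect {n : ℕ} (X : Diff n) : Prop :=
  ∀ α ∈ X.support, (α.sum fun _ k => k) = 1

/-- The identity differential operator `1·∂^0`. -/
noncomputable def unitD {n : ℕ} : Diff n := Finsupp.single 0 1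

/-- Composition (`⋄`-)power `L^m = L ⋄ ⋯ ⋄ L`. -/
noncomputable def dpow {n : ℕ} (L : Diff n) : ℕ → Diff n
  | 0 => unitD
  | m + 1 => diam L (dpow L m)

/-- Black power `X^{•k} = X • ⋯ • X`. -/
noncomputable def bpow {n : ℕ} (X : Diff n) : ℕ → Diff n
  | 0 => unitD
  | k + 1 => black X (bpow X k)

-- The commutator of two derivations is a derivation, and this one kills every variable.
theorem MvPolynomial.commute_pderiv {σ R : Type*} [CommRing R] (i j : σ) :
    Commute ((MvPolynomial.pderiv i).toLinearMap : Module.End R (MvPolynomial σ R))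
      (MvPolynomial.pderiv j).toLinearMap := by
  have h : ⁅MvPolynomial.pderiv i, MvPolynomial.pderiv j⁆ =
      (0 : Derivation R (MvPolynomial σ R) (MvPolynomial σ R)) :=
    MvPolynomial.derivation_ext fun k => by
      classical
      rw [Derivation.commutator_apply]
      simp [MvPolynomial.pderiv_X, Pi.single_apply, apply_ite]
  rw [commute_iff_lie_eq, ← Derivation.commutator_coe_linear_map, h]
  rfl

theorem List.prod_map_pow_add {ι M : Type*} [Monoid M] (P : ι → M)
    (hP : ∀ i j, Commute (P i) (P j)) (a b : ι → ℕ) (l : List ι) :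
    (l.map fun i => P i ^ (a i + b i)).prod =
      (l.map fun i => P i ^ a i).prod * (l.map fun i => P i ^ b i).prod := by
  induction l with
  | nil => simp
  | cons i l ih =>
    have hcomm : Commute (P i ^ b i) (l.map fun i => P i ^ a i).prod :=
      Commute.list_prod_right _ _ fun x hx => by
        obtain ⟨j, -, rfl⟩ := List.mem_map.mp hx
        exact (hP i j).pow_pow _ _
    rw [List.map_cons, List.map_cons, List.map_cons, List.prod_cons, List.prod_cons,
      List.prod_cons, ih, pow_add, mul_assoc, hcomm.left_comm, mul_assoc]

section Dop

variable {n : ℕ}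

theorem Dop_add (α β : Fin n →₀ ℕ) : Dop (α + β) = Dop α * Dop β := by
  simp only [Dop, List.ofFn_eq_map, Finsupp.coe_add, Pi.add_apply]
  exact List.prod_map_pow_add _ (fun i j => MvPolynomial.commute_pderiv i j) _ _ _

theorem Dop_single_one (i : Fin n) :
    Dop (Finsupp.single i 1) = (MvPolynomial.pderiv i).toLinearMap := by
  rw [Dop, List.ofFn_eq_map, List.prod_map_eq_pow_single i]
  · simp
  · intro j hj _
    simp [Finsupp.single_eq_of_ne hj]

theorem Dop_mul_of_sum_eq_one {α : Fin n →₀ ℕ} (hα : (α.sum fun _ k => k) = 1)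
    (p q : MvPolynomial (Fin n) ℂ) :
    Dop α (p * q) = Dop α p * q + p * Dop α q := by
  obtain ⟨i, rfl⟩ := (Finsupp.sum_eq_one_iff α).mp hα
  rw [Dop_single_one]
  exact MvPolynomial.pderiv_mul

end Dop

section White

variable {n : ℕ}

@[simp]
theorem white_single_single (α β : Fin n →₀ ℕ) (u v : MvPolynomial (Fin n) ℂ) :
    white (Finsupp.single α u) (Finsupp.single β v) = Finsupp.single β (u * Dop α v) := by
  simp [white]

@[simp]
theorem white_zero_left (Y : Diff n) : white 0 Y = 0 := by
  simp [white]

@[simp]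
theorem white_zero_right (X : Diff n) : white X 0 = 0 := by
  simp [white]

theorem white_add_left (X₁ X₂ Y : Diff n) :
    white (X₁ + X₂) Y = white X₁ Y + white X₂ Y :=
  Finsupp.sum_add_index' (by simp) fun _ _ _ => by
    simp [add_mul, Finsupp.single_add, Finsupp.sum_add]

theorem white_add_right (X Y₁ Y₂ : Diff n) :
    white X (Y₁ + Y₂) = white X Y₁ + white X Y₂ := by
  simp only [white, ← Finsupp.sum_add]
  refine Finsupp.sum_congr fun _ _ => Finsupp.sum_add_index' (by simp) fun _ _ _ => ?_
  simp [mul_add, Finsupp.single_add]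

@[simp]
theorem black_single_single (α β : Fin n →₀ ℕ) (u v : MvPolynomial (Fin n) ℂ) :
    black (Finsupp.single α u) (Finsupp.single β v) = Finsupp.single (α + β) (u * v) := by
  simp [black]

@[simp]
theorem black_zero_left (Y : Diff n) : black 0 Y = 0 := by
  simp [black]

@[simp]
theorem black_zero_right (X : Diff n) : black X 0 = 0 := by
  simp [black]

theorem black_add_left (X₁ X₂ Y : Diff n) :
    black (X₁ + X₂) Y = black X₁ Y + black X₂ Y :=
  Finsupp.sum_add_index' (by simp) fun _ _ _ => by
    simp [add_mul, Finsupp.single_add, Finsupp.sum_add]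

theorem black_add_right (X Y₁ Y₂ : Diff n) :
    black X (Y₁ + Y₂) = black X Y₁ + black X Y₂ := by
  simp only [black, ← Finsupp.sum_add]
  refine Finsupp.sum_congr fun _ _ => Finsupp.sum_add_index' (by simp) fun _ _ _ => ?_
  simp [mul_add, Finsupp.single_add]

theorem black_comm (X Y : Diff n) : black X Y = black Y X := by
  rw [black, Finsupp.sum_comm]
  simp only [add_comm, mul_comm]
  rfl

end White

section Associator

variable {n : ℕ}

theorem white_associator_single_of_sum_eq_one {α : Fin n →₀ ℕ}
    (hα : (α.sum fun _ k => k) = 1) (u : MvPolynomial (Fin n) ℂ) (Y Z : Diff n) :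
    white (Finsupp.single α u) (white Y Z) - white (white (Finsupp.single α u) Y) Z =
      white (black (Finsupp.single α u) Y) Z := by
  induction Y using Finsupp.induction_linear with
  | zero => simp
  | add Y₁ Y₂ h₁ h₂ =>
    simp only [white_add_left, white_add_right, black_add_right]
    rw [← h₁, ← h₂]
    abel
  | single β v =>
    induction Z using Finsupp.induction_linear with
    | zero => simp
    | add Z₁ Z₂ h₁ h₂ =>
      simp only [white_add_right]
      rw [← h₁, ← h₂]
      abel
    | single γ w =>
      simp only [white_single_single, black_single_single, ← Finsupp.single_sub,
        Dop_mul_of_sum_eq_one hα, Dop_add, Module.End.mul_apply]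
      congr 1
      ring

theorem white_associator_eq_white_black {X : Diff n} (hX : IsVect X) (Y Z : Diff n) :
    white X (white Y Z) - white (white X Y) Z = white (black X Y) Z := by
  rw [← Finsupp.sum_single X]
  refine Finset.sum_induction _ (fun X => white X (white Y Z) - white (white X Y) Z =
    white (black X Y) Z) (fun X₁ X₂ h₁ h₂ => ?_) (by simp)
    fun α hα => white_associator_single_of_sum_eq_one (hX α hα) _ Y Z
  simp only [white_add_left, black_add_left]
  rw [← h₁, ← h₂]
  abel

end Associator

/-- for vector fields `X, Y` and any operator `Z`, the white
associator is left-symmetric: `(X,Y,Z)^∘ = (Y,X,Z)^∘`. -/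
theorem white_associator_left_symm {n : ℕ} (X Y Z : Diff n)
    (hX : IsVect X) (hY : IsVect Y) :
    white X (white Y Z) - white (white X Y) Z =
      white Y (white X Z) - white (white Y X) Z := by
  rw [white_associator_eq_white_black hX, white_associator_eq_white_black hY, black_comm]
end

section
/- Logarithmic Lagrange inversion formula: for f ∈ ℂ[[x]] with f(0) = 0 and f'(0) ≠ 0, the compositional inverse satisfies f^{⟨−1⟩}(x) = ln( Σ_{m≥0} c_m x^m/m! ), where c_m = [((1/f'(x))·d/dx)^m (e^x)] evaluated at x = 0, and ln denotes the formal power series logarithm. -/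
/-!
Substituting `g` (where `f ∘ g = x`) turns `(1/f')·d/dx` into `d/dx`: the chain rule gives
`f'(g)·g' = (f ∘ g)' = 1`, so `(1/f')(g) = g'` and `((1/f')·h')(g) = g'·h'(g) = (h ∘ g)'`.
Hence `c_m` is the `m`-th derivative of `e^{g(x)}` at `0`, i.e. `Σ c_m x^m/m! = e^{g(x)}`, and
`ln e^{g} = g` because `ln(1 + x) ∘ (e^x − 1) = x`, both sides having derivative `1` and no
constant term.
-/

open PowerSeries

/-- Composition `(g ∘ f)(x) = g(f(x))` of formal power series (meaningful when
`f(0) = 0`): the `n`-th coefficient is `Σ_{k=0}^{n} g_k · [x^n] f^k`. -/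
noncomputable def pcomp (g f : PowerSeries ℂ) : PowerSeries ℂ :=
  PowerSeries.mk fun n =>
    ∑ k ∈ Finset.range (n + 1), (coeff k g) * coeff n (f ^ k)

/-- The operator `h ↦ (1/f'(x))·dh/dx` on formal power series. -/
noncomputable def lagOp (f : PowerSeries ℂ) (h : PowerSeries ℂ) : PowerSeries ℂ :=
  (derivativeFun f)⁻¹ * derivativeFun h

/-- The formal logarithm `ln(1 + u) = Σ_{k≥1} (-1)^{k-1} u^k / k` (for `u(0) = 0`);
the `k = 0` term vanishes since `(0 : ℂ)⁻¹ = 0`. -/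
noncomputable def plog (u : PowerSeries ℂ) : PowerSeries ℂ :=
  PowerSeries.mk fun n =>
    ∑ k ∈ Finset.range (n + 1), (-1 : ℂ) ^ (k - 1) * (k : ℂ)⁻¹ * coeff n (u ^ k)

/-- The formal power series `e^x = Σ_{n≥0} xⁿ/n!`. -/
noncomputable def expS : PowerSeries ℂ := PowerSeries.mk fun n => (n.factorial : ℂ)⁻¹

open Nat

namespace PowerSeries

section CommRing

variable {R : Type*} [CommRing R]

theorem coeff_pow_eq_zero_of_lt {f : R⟦X⟧} (hf : constantCoeff f = 0) {n k : ℕ} (h : n < k) :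
    coeff n (f ^ k) = 0 :=
  coeff_of_lt_order n <| (Nat.cast_lt.mpr h).trans_le (le_order_pow_of_constantCoeff_eq_zero k hf)

theorem constantCoeff_subst_of_constantCoeff_eq_zero {f g : R⟦X⟧} (hg : constantCoeff g = 0) :
    constantCoeff (f.subst g) = constantCoeff f := by
  rw [← coeff_zero_eq_constantCoeff_apply, coeff_subst' (.of_constantCoeff_zero' hg),
    finsum_eq_single _ 0 fun d hd => by simp [coeff_pow_eq_zero_of_lt hg (Nat.pos_of_ne_zero hd)]]
  simp

theorem subst_one {a : R⟦X⟧} (ha : HasSubst a) : (1 : R⟦X⟧).subst a = 1 := by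
  rw [← coe_substAlgHom ha, map_one]

end CommRing

section Rat

variable {A : Type*} [CommRing A] [Algebra ℚ A]

theorem derivative_log_mul_one_add_X : d⁄dX A (log A) * (1 + X) = 1 := by
  ext n
  rcases n with _ | n
  · simp [deriv_log]
  · rw [mul_add, mul_one, map_add, coeff_succ_mul_X, deriv_log, coeff_mk, coeff_mk, coeff_one]
    simp [pow_succ]

theorem log_subst_exp_sub_one : (log A).subst (exp A - 1) = X := by
  have : IsAddTorsionFree A := .of_module_rat A
  have hE : HasSubst (exp A - 1) := HasSubst.exp_sub_one
  refine derivative.ext ?_ ?_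
  · have h1 : (1 + X : A⟦X⟧).subst (exp A - 1) = exp A := by
      rw [subst_add hE, subst_one hE, subst_X hE, add_sub_cancel]
    calc d⁄dX A ((log A).subst (exp A - 1))
        = (d⁄dX A (log A)).subst (exp A - 1) * exp A := by
          rw [derivative_subst hE, map_sub, derivative_one, sub_zero, derivative_exp]
      _ = (d⁄dX A (log A) * (1 + X)).subst (exp A - 1) := by rw [subst_mul hE, h1]
      _ = d⁄dX A X := by rw [derivative_log_mul_one_add_X, subst_one hE, derivative_X]
  · rw [constantCoeff_subst_of_constantCoeff_eq_zero (by simp [constantCoeff_exp])]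
    simp

theorem logOf_exp_subst {g : A⟦X⟧} (hg : HasSubst g) : logOf ((exp A).subst g) = g := by
  rw [logOf_eq, ← subst_one hg (R := A), ← subst_sub hg,
    ← subst_comp_subst_apply HasSubst.exp_sub_one hg, log_subst_exp_sub_one, subst_X hg]

end Rat

theorem mk_constantCoeff_iterate_derivative {K : Type*} [Field K] [CharZero K] (f : K⟦X⟧) :
    (mk fun m => constantCoeff ((d⁄dX K)^[m] f) * (m ! : K)⁻¹) = f := by
  ext m
  rw [coeff_mk, constantCoeff_iterate_derivative, mul_comm,
    inv_mul_cancel_left₀ (Nat.cast_ne_zero.mpr m.factorial_ne_zero)]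

end PowerSeries

open Finset in
theorem pcomp_eq_subst {f : ℂ⟦X⟧} (hf : constantCoeff f = 0) (g : ℂ⟦X⟧) :
    pcomp g f = g.subst f := by
  ext n
  rw [pcomp, coeff_mk, coeff_subst' (.of_constantCoeff_zero' hf),
    finsum_eq_sum_of_support_subset (s := range (n + 1))]
  · simp only [smul_eq_mul]
  · refine Function.support_subset_iff'.mpr fun k hk => ?_
    rw [coeff_pow_eq_zero_of_lt hf (by simpa using hk), smul_zero]

theorem expS_eq_exp : expS = exp ℂ := by
  ext n
  simp [expS, coeff_exp]

theorem plog_eq_subst {u : ℂ⟦X⟧} (hu : constantCoeff u = 0) : plog u = (log ℂ).subst u := by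
  rw [← pcomp_eq_subst hu]
  ext n
  rw [plog, pcomp, coeff_mk, coeff_mk]
  refine Finset.sum_congr rfl fun k _ => ?_
  rcases k with _ | k
  · simp
  · simp [pow_succ, div_eq_mul_inv]

theorem semiconj_subst_lagOp {f g : ℂ⟦X⟧} (hf1 : coeff 1 f ≠ 0) (hg : HasSubst g)
    (hgf : f.subst g = X) :
    Function.Semiconj (subst g : ℂ⟦X⟧ → ℂ⟦X⟧) (lagOp f) (d⁄dX ℂ) := by
  intro A
  have hf' : constantCoeff (d⁄dX ℂ f) ≠ 0 := by
    simpa [← coeff_zero_eq_constantCoeff_apply, coeff_derivative] using hf1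
  have hchain : (d⁄dX ℂ f).subst g * d⁄dX ℂ g = 1 := by
    rw [← derivative_subst hg, hgf, derivative_X]
  have hinv : (d⁄dX ℂ f)⁻¹.subst g = d⁄dX ℂ g := by
    refine left_inv_eq_right_inv ?_ hchain
    rw [← subst_mul hg, mul_comm, PowerSeries.mul_inv_cancel _ hf', subst_one hg]
  change ((d⁄dX ℂ f)⁻¹ * d⁄dX ℂ A).subst g = _
  rw [subst_mul hg, hinv, derivative_subst hg, mul_comm]

theorem log_lagrange_general (f g : PowerSeries ℂ)
    (hf1 : coeff 1 f ≠ 0)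
    (hg0 : constantCoeff g = 0) (hgf : pcomp f g = X) :
    g = plog ((PowerSeries.mk fun m =>
          (constantCoeff ((lagOp f)^[m] expS)) * (m.factorial : ℂ)⁻¹) - 1) := by
  have hg : HasSubst g := .of_constantCoeff_zero' hg0
  rw [pcomp_eq_subst hg0] at hgf
  have hE : (mk fun m => constantCoeff ((lagOp f)^[m] expS) * (m.factorial : ℂ)⁻¹) =
      (exp ℂ).subst g := by
    conv_rhs => rw [← mk_constantCoeff_iterate_derivative ((exp ℂ).subst g)]
    simp_rw [expS_eq_exp, ← (semiconj_subst_lagOp hf1 hg hgf).iterate_right _ _,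
      constantCoeff_subst_of_constantCoeff_eq_zero hg0]
  have hE0 : constantCoeff ((exp ℂ).subst g - 1) = 0 := by
    rw [map_sub, constantCoeff_subst_of_constantCoeff_eq_zero hg0, constantCoeff_exp, map_one,
      sub_self]
  rw [hE, plog_eq_subst hE0, ← logOf_eq, logOf_exp_subst hg]

/-- logarithmic Lagrange inversion: the compositional inverse `g`
of `f` satisfies `g = ln(Σ_{m≥0} c_m x^m/m!)` where
`c_m = ((1/f')·d/dx)^m(e^x)|_{x=0}`. -/
theorem log_lagrange (f g : PowerSeries ℂ)
    (hf0 : constantCoeff f = 0) (hf1 : coeff 1 f ≠ 0)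
    (hg0 : constantCoeff g = 0) (hgf : pcomp f g = X) (hfg : pcomp g f = X) :
    g = plog ((PowerSeries.mk fun m =>
          (constantCoeff ((lagOp f)^[m] expS)) * (m.factorial : ℂ)⁻¹) - 1) :=
  log_lagrange_general f g hf1 hg0 hgf
end
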